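/- arXiv:1502.01447 — 2 statements merged into one kernel-verified Lean document; each statement's English description precedes it below -/
import Mathlib

section
/- Let m,n∈ℕ with m≥2n and let 0<t<1. Then F_{m,n}(t) ≤ binom(m,n)·b_n(t). -/
open scoped BigOperators ENNReal
open Finset

noncomputable section

namespace Smolyak

/-- `f` is 1-periodic in each of its `d` variables. -/
def Periodic1 {d : ℕ} (f : (Fin d → ℝ) → ℝ) : Prop :=
  ∀ (x : Fin d → ℝ) (i : Fin d), f (Function.update x i (x i + 1)) = f x

/-- sup-norm of a function on the torus. -/
def supNorm {d : ℕ} (f : (Fin d → ℝ) → ℝ) : ℝ := ⨆ x, |f x|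

/-- `L_p` norm (over the unit cube) for `0<p≤∞`. -/
def pNorm (d : ℕ) (p : ℝ≥0∞) (f : (Fin d → ℝ) → ℝ) : ℝ :=
  if p = ∞ then supNorm f
  else (∫ x in Set.Icc (0 : Fin d → ℝ) 1, |f x| ^ p.toReal) ^ (1 / p.toReal)

/-- `(p+1)^{1/p}`, with the convention that it equals `1` for `p = ∞`. -/
def pfac (p : ℝ≥0∞) : ℝ := if p = ∞ then 1 else (p.toReal + 1) ^ (1 / p.toReal)

/-- `[r(p+1)]^{-1/p}`, with the convention that it equals `1` for `p = ∞`. -/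
def rpfac (r : ℕ) (p : ℝ≥0∞) : ℝ :=
  if p = ∞ then 1 else ((r : ℝ) * (p.toReal + 1)) ^ (-(1 / p.toReal))

/-- the mixed `(l,u)`-th difference operator `Δ_h^{l,u}`. -/
def deltaMix (d l : ℕ) (u : Finset (Fin d)) (h : Fin d → ℝ)
    (f : (Fin d → ℝ) → ℝ) (x : Fin d → ℝ) : ℝ :=
  ∑ j ∈ Fintype.piFinset (fun i => Finset.range (if i ∈ u then l + 1 else 1)),
    (∏ i ∈ u, ((-1 : ℝ) ^ (l - j i) * (l.choose (j i) : ℝ))) *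
      f (fun i => x i + (j i : ℝ) * h i)

/-- the Hölder–Lipschitz mixed seminorm `|f|_{H^α(u)}` (difference order `l`). -/
def holderSemi (d l : ℕ) (α : ℝ) (u : Finset (Fin d)) (f : (Fin d → ℝ) → ℝ) : ℝ :=
  ⨆ h : {h : Fin d → ℝ // ∀ i, h i ∈ Set.Ioc (0:ℝ) 1},
    (∏ i ∈ u, (h.1 i) ^ (-α)) * supNorm (deltaMix d l u h.1 f)

/-- membership in the unit ball `U^α_∞` of `H^α` (difference order `l`):
continuous, 1-periodic, and all the seminorm quotients are `≤ 1`. -/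
def memU (d l : ℕ) (α : ℝ) (f : (Fin d → ℝ) → ℝ) : Prop :=
  Continuous f ∧ Periodic1 f ∧
    ∀ (u : Finset (Fin d)) (h : Fin d → ℝ), (∀ i, h i ∈ Set.Ioc (0:ℝ) 1) →
      ∀ x, (∏ i ∈ u, (h i) ^ (-α)) * |deltaMix d l u h f x| ≤ 1

/-- the class `U^{α,s}_∞`: unit ball with zero boundary values. -/
def Us (d : ℕ) (α : ℝ) : Set ((Fin d → ℝ) → ℝ) :=
  {f | memU d 2 α f ∧ ∀ x : Fin d → ℝ, (∃ j : Fin d, ∃ z : ℤ, x j = (z : ℝ)) → f x = 0}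

/-- the `j`-th variable is active for `f`. -/
def ActiveVar {d : ℕ} (f : (Fin d → ℝ) → ℝ) (j : Fin d) : Prop :=
  ∃ x t, f (Function.update x j t) ≠ f x

/-- the class `U^{α,ν}_∞` (difference order `l`): members of the unit ball with
at most `ν` active variables. -/
def UnuL (d l : ℕ) (α : ℝ) (ν : ℕ) : Set ((Fin d → ℝ) → ℝ) :=
  {f | memU d l α f ∧ ∃ u : Finset (Fin d), u.card ≤ ν ∧ ∀ j, ActiveVar f j → j ∈ u}

/-- `U^{α,ν}_∞` for smoothness `α ≤ 2` (order-2 differences). -/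
def Unu (d : ℕ) (α : ℝ) (ν : ℕ) : Set ((Fin d → ℝ) → ℝ) := UnuL d 2 α ν

/-! ### Faber system -/

/-- the hat function `M_2` with knots `0,1,2`. -/
def hatM (x : ℝ) : ℝ := max 0 (1 - |x - 1|)

/-- univariate periodic Faber hat `φ_{k,s}`. -/
def phi1 (k s : ℕ) (x : ℝ) : ℝ :=
  if k = 0 then 1 else hatM (2 ^ k * Int.fract x - 2 * s)

/-- support of a multi-index. -/
def suppK {d : ℕ} (k : Fin d → ℕ) : Finset (Fin d) :=
  Finset.univ.filter fun i => k i ≠ 0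

/-- the Faber coefficient functional `λ_{k,s}(f)` (coordinatewise composition of
`f ↦ f(0)` for `k_i = 0` and `f ↦ -½Δ²_{2^{-k_i}}(f, 2^{-k_i+1}s_i)` for `k_i ≥ 1`). -/
def lamF (d : ℕ) (k s : Fin d → ℕ) (f : (Fin d → ℝ) → ℝ) : ℝ :=
  (-(1/2) : ℝ) ^ (suppK k).card *
    deltaMix d 2 (suppK k) (fun i => (2:ℝ) ^ (-(k i : ℤ))) f
      (fun i => if k i = 0 then 0 else (2:ℝ) ^ (-(k i : ℤ) + 1) * (s i : ℝ))

/-- the Faber block `q_k(f) = Σ_{s∈Z^d(k)} λ_{k,s}(f) φ_{k,s}`. -/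
def qF (d : ℕ) (k : Fin d → ℕ) (f : (Fin d → ℝ) → ℝ) (x : Fin d → ℝ) : ℝ :=
  ∑ s ∈ Fintype.piFinset (fun i => Finset.range (2 ^ (k i - 1))),
    lamF d k s f * ∏ i, phi1 (k i) (s i) (x i)

/-- the index set `{k ∈ ℕ^d : |k|₁ = m}` (all `k_i ≥ 1`). -/
def kSetRing (d m : ℕ) : Finset (Fin d → ℕ) :=
  (Fintype.piFinset fun _ : Fin d => Finset.Icc 1 m).filter fun k => ∑ i, k i = m

/-- the operator `R̊_m(f) = Σ_{k∈ℕ^d, |k|₁≤m} q_k(f)`. -/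
def RringOp (d m : ℕ) (f : (Fin d → ℝ) → ℝ) (x : Fin d → ℝ) : ℝ :=
  ∑ k ∈ (Fintype.piFinset fun _ : Fin d => Finset.Icc 1 m).filter (fun k => ∑ i, k i ≤ m),
    qF d k f x

/-- the operator `R^ν_m(f) = Σ_{k∈ℤ₊^d, |supp k|≤ν, |k|₁≤m} q_k(f)`. -/
def RnuOp (d m ν : ℕ) (f : (Fin d → ℝ) → ℝ) (x : Fin d → ℝ) : ℝ :=
  ∑ k ∈ (Fintype.piFinset fun _ : Fin d => Finset.range (m+1)).filter
      (fun k => ∑ i, k i ≤ m ∧ (suppK k).card ≤ ν),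
    qF d k f x

/-- the dyadic point `2^{-k}s`. -/
def toPoint (d : ℕ) (ks : (Fin d → ℕ) × (Fin d → ℕ)) : Fin d → ℝ :=
  fun i => (ks.2 i : ℝ) / 2 ^ (ks.1 i)

/-- the (interior) Smolyak grid `G̊(m)`. -/
def ringGrid (d m : ℕ) : Finset (Fin d → ℝ) :=
  (((Fintype.piFinset fun _ : Fin d => Finset.Icc 1 m) ×ˢ
      (Fintype.piFinset fun _ : Fin d => Finset.range (2 ^ m))).filter
    fun ks => (∑ i, ks.1 i = m) ∧ ∀ i, 1 ≤ ks.2 i ∧ ks.2 i < 2 ^ ks.1 i).image (toPoint d)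

/-- the Smolyak grid `G^ν(m)`. -/
def nuGrid (d m ν : ℕ) : Finset (Fin d → ℝ) :=
  (((Fintype.piFinset fun _ : Fin d => Finset.range (m+1)) ×ˢ
      (Fintype.piFinset fun _ : Fin d => Finset.range (2 ^ m))).filter
    fun ks => (∑ i, ks.1 i = m) ∧ (suppK ks.1).card ≤ ν ∧ ∀ i, ks.2 i < 2 ^ ks.1 i).image (toPoint d)

/-- the quantity of optimal sampling recovery on the grid `G` w.r.t. the class `F`. -/
def recErr (d : ℕ) (p : ℝ≥0∞) (G : Finset (Fin d → ℝ)) (F : Set ((Fin d → ℝ) → ℝ)) : ℝ≥0∞ :=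
  ⨅ Φ : (Fin d → ℝ) → (Fin d → ℝ) → ℝ,
    ⨆ f ∈ F, ENNReal.ofReal (pNorm d p (fun x => f x - ∑ ξ ∈ G, f ξ * Φ ξ x))

/-- the quantity of optimal cubature on the grid `G` w.r.t. the class `F`. -/
def cubErr (d : ℕ) (G : Finset (Fin d → ℝ)) (F : Set ((Fin d → ℝ) → ℝ)) : ℝ≥0∞ :=
  ⨅ w : (Fin d → ℝ) → ℝ,
    ⨆ f ∈ F, ENNReal.ofReal |(∫ x in Set.Icc (0 : Fin d → ℝ) 1, f x) - ∑ ξ ∈ G, w ξ * f ξ|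

/-! ### auxiliary quantities -/

/-- `F_{m,n}(t) = Σ_{s≥0} binom(m+s,n) t^s`. -/
def Fser (m n : ℕ) (t : ℝ) : ℝ := ∑' s : ℕ, ((m + s).choose n : ℝ) * t ^ s

/-- the function `b_n(t)`. -/
def bfun (n : ℕ) (t : ℝ) : ℝ :=
  if t < 1/2 then (1 - 2*t)⁻¹
  else if t = 1/2 then 2*((n : ℝ)+1)
  else (2*t - 1)⁻¹ * (t/(1-t))^(n+1)

/-- `β(l,m)`. -/
def beta (α : ℝ) (l m : ℕ) : ℝ :=
  if l = 0 then 1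
  else (((2:ℝ) ^ α - 1)⁻¹) ^ l * ∑ s ∈ Finset.range l, (m.choose s : ℝ) * ((2:ℝ) ^ α - 1) ^ s

/-- `|2^α - 2|^{-|sgn(α-1)|}`. -/
def sgnfac (α : ℝ) : ℝ := if α = 1 then 1 else |(2:ℝ) ^ α - 2|⁻¹

/-- the case distinction factor `κ`: `1` for `α>1`, `d` for `α=1`, `(2^α-1)^{-d}` for `α<1`. -/
def kap (α : ℝ) (d : ℕ) : ℝ :=
  if 1 < α then 1 else if α = 1 then (d : ℝ) else (((2:ℝ) ^ α - 1)⁻¹) ^ d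

/-- the constant `å(d)`. -/
def aring (α : ℝ) (p : ℝ≥0∞) (d : ℕ) : ℝ := sgnfac α * ((2 * pfac p)⁻¹) ^ d * kap α d

/-- the constant `a(ν)`. -/
def anu (α : ℝ) (p : ℝ≥0∞) (ν : ℕ) : ℝ := sgnfac α * (1 + (2 * pfac p)⁻¹) ^ ν * kap α ν

/-- `γ(ν,m)`. -/
def gammaB (α : ℝ) (p : ℝ≥0∞) (ν m : ℕ) : ℝ :=
  ∑ l ∈ Finset.range (ν+1), (ν.choose l : ℝ) * ((2 * pfac p)⁻¹) ^ l * beta α l m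

/-- `γ'(ν,m)`. -/
def gammaP (α : ℝ) (ν m : ℕ) : ℝ :=
  ∑ l ∈ Finset.Icc 1 ν, (ν.choose l : ℝ) * ((128:ℝ)⁻¹) ^ l * beta α l m

/-! ### B-splines and quasi-interpolation -/

/-- the cardinal B-spline `M_ℓ` of order `ℓ` (supported on `[0,ℓ]`); `Msp 0 = 0` by convention. -/
def Msp : ℕ → ℝ → ℝ
  | 0, _ => 0
  | 1, x => if 0 ≤ x ∧ x < 1 then 1 else 0
  | (n+2), x => ∫ t in (0:ℝ)..1, Msp (n+1) (x - t)

/-- `g_{k,s}`: periodized scaled cubic B-spline. -/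
def gks (k s : ℕ) (x : ℝ) : ℝ := Msp 4 (2 ^ (k + 2) * Int.fract x - 4 * s)

/-- the fooling function `f_{m,n}`. -/
def fmnFun (d : ℕ) (α : ℝ) (m n : ℕ) (x : Fin d → ℝ) : ℝ :=
  ((2:ℝ) ^ (5 * d))⁻¹ * ∑ l ∈ Finset.Icc m n, (2:ℝ) ^ (-(α * (l : ℝ))) *
    ∑ k ∈ kSetRing d l, ∑ s ∈ Fintype.piFinset (fun i => Finset.range (2 ^ k i)),
      ∏ j, gks (k j) (s j) (x j)

/-- the mesh size `h^{(k)} = (2r)^{-1} 2^{-k}` (allowing integer levels). -/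
def hkmesh (r : ℕ) (t : ℤ) : ℝ := ((2 * r : ℕ) : ℝ)⁻¹ * (2:ℝ) ^ (-t)

/-- the sequence `Λ` is even and supported on `|j| ≤ μ`. -/
def EvenSeq (μ : ℕ) (lam : ℤ → ℝ) : Prop :=
  (∀ j, lam (-j) = lam j) ∧ ∀ j : ℤ, (μ : ℤ) < |j| → lam j = 0

/-- the univariate operator `Q` built from `M_{2r}` and `Λ` reproduces all polynomials
of degree at most `2r - 1`. -/
def Reproduces (r μ : ℕ) (lam : ℤ → ℝ) : Prop :=
  ∀ g : Polynomial ℝ, g.natDegree < 2 * r → ∀ x : ℝ,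
    (∑' s : ℤ, (∑ j ∈ Finset.Icc (-(μ:ℤ)) (μ:ℤ), lam j * g.eval ((s:ℝ) - (j:ℝ) + (r:ℝ))) *
      Msp (2*r) (x - (s:ℝ))) = g.eval x

/-- the tensor-product quasi-interpolation operator `∏_i Q_{t_i}` for 1-periodic functions
(equal to `0` whenever some level `t_i = -1`). -/
def Qmulti (d r μ : ℕ) (lam : ℤ → ℝ) (t : Fin d → ℤ) (f : (Fin d → ℝ) → ℝ)
    (x : Fin d → ℝ) : ℝ :=
  if ∀ i, 0 ≤ t i then
    ∑' s : Fin d → ℤ,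
      (∑ j ∈ Fintype.piFinset (fun _ : Fin d => Finset.Icc (-(μ:ℤ)) (μ:ℤ)),
        (∏ i, lam (j i)) * f (fun i => hkmesh r (t i) * ((s i : ℝ) - (j i : ℝ) + (r:ℝ))))
      * ∏ i, Msp (2*r) (x i / hkmesh r (t i) - (s i : ℝ))
  else 0

/-- the mixed dyadic block `q_k = ∏_i (Q_{k_i} - Q_{k_i - 1})`. -/
def qsp (d r μ : ℕ) (lam : ℤ → ℝ) (k : Fin d → ℕ) (f : (Fin d → ℝ) → ℝ)
    (x : Fin d → ℝ) : ℝ :=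
  ∑ v : Finset (Fin d), (-1:ℝ) ^ v.card *
    Qmulti d r μ lam (fun i => if i ∈ v then (k i : ℤ) - 1 else (k i : ℤ)) f x

/-- the operator `R^ν_m` built from the B-spline quasi-interpolation blocks. -/
def RnuSp (d r μ : ℕ) (lam : ℤ → ℝ) (m ν : ℕ) (f : (Fin d → ℝ) → ℝ)
    (x : Fin d → ℝ) : ℝ :=
  ∑ k ∈ (Fintype.piFinset fun _ : Fin d => Finset.range (m+1)).filter
      (fun k => ∑ i, k i ≤ m ∧ (suppK k).card ≤ ν),
    qsp d r μ lam k f x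

/-- the symbol `P_Λ(z) = z^r Σ_j λ(j) z^j`. -/
def PLam (r μ : ℕ) (lam : ℤ → ℝ) : LaurentPolynomial ℝ :=
  LaurentPolynomial.T (r : ℤ) *
    ∑ j ∈ Finset.Icc (-(μ:ℤ)) (μ:ℤ), LaurentPolynomial.C (lam j) * LaurentPolynomial.T j

/-- `P_Λ(z²)`. -/
def PLam2 (r μ : ℕ) (lam : ℤ → ℝ) : LaurentPolynomial ℝ :=
  LaurentPolynomial.T (2 * r : ℤ) *
    ∑ j ∈ Finset.Icc (-(μ:ℤ)) (μ:ℤ), LaurentPolynomial.C (lam j) * LaurentPolynomial.T (2*j)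

/-- `P_even(z) := P_Λ(z) − 2^{−2r+1} P_Λ(z²) Σ_{j=0}^{r} binom(2r,2j) z^{−2j}`. -/
def Peven (r μ : ℕ) (lam : ℤ → ℝ) : LaurentPolynomial ℝ :=
  PLam r μ lam - LaurentPolynomial.C (((2:ℝ) ^ (2*r-1))⁻¹) * PLam2 r μ lam *
    ∑ j ∈ Finset.range (r+1),
      LaurentPolynomial.C (((2*r).choose (2*j) : ℝ)) * LaurentPolynomial.T (-(2*(j:ℤ)))

/-- `P_odd(z) := P_Λ(z) − 2^{−2r+1} P_Λ(z²) Σ_{j=0}^{r−1} binom(2r,2j+1) z^{−2j−1}`. -/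
def Podd (r μ : ℕ) (lam : ℤ → ℝ) : LaurentPolynomial ℝ :=
  PLam r μ lam - LaurentPolynomial.C (((2:ℝ) ^ (2*r-1))⁻¹) * PLam2 r μ lam *
    ∑ j ∈ Finset.range r,
      LaurentPolynomial.C (((2*r).choose (2*j+1) : ℝ)) * LaurentPolynomial.T (-(2*(j:ℤ)+1))

/-- the norm `‖P‖ = Σ |coefficients|` of a Laurent polynomial. -/
def lpNorm (P : LaurentPolynomial ℝ) : ℝ := ∑ n ∈ P.coeff.support, |P.coeff n|

/-- `b = ‖L_Λ‖_{C(𝕋)} = sup_x |Σ_{s∈ℤ} Σ_{|j|≤μ} λ(j) M_{2r}(x−j−s)|`. -/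
def bLam (r μ : ℕ) (lam : ℤ → ℝ) : ℝ :=
  ⨆ x : ℝ, |∑' s : ℤ, ∑ j ∈ Finset.Icc (-(μ:ℤ)) (μ:ℤ), lam j * Msp (2*r) (x - (j:ℝ) - (s:ℝ))|

/-- `δ(ν,a,b,m) = Σ_{l=0}^{ν} binom(ν,l) a^l b^{ν−l} β(l,m)`. -/
def deltaB (α : ℝ) (ν : ℕ) (a b : ℝ) (m : ℕ) : ℝ :=
  ∑ l ∈ Finset.range (ν+1), (ν.choose l : ℝ) * a ^ l * b ^ (ν - l) * beta α l m

/-- the constant `c(ν,a,b)`. -/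
def cB (α : ℝ) (ν : ℕ) (a b : ℝ) : ℝ :=
  sgnfac α *
    (if 1 < α then (a + b) ^ ν
     else if α = 1 then (ν : ℝ) * (a + b) ^ ν
     else (a / ((2:ℝ) ^ α - 1) + b) ^ ν)

/-- the case distinction factor for cubature: `(5/4)^ν`, `ν(5/4)^ν`, `[1+1/(4(2^α−1))]^ν`. -/
def kapInt (α : ℝ) (ν : ℕ) : ℝ :=
  if 1 < α then (5/4 : ℝ) ^ ν
  else if α = 1 then (ν : ℝ) * (5/4 : ℝ) ^ ν
  else (1 + (4 * ((2:ℝ) ^ α - 1))⁻¹) ^ ν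

/-! Vandermonde's identity `C(m+s, n) = ∑ᵢ C(m, n-i) C(s, i)` and `∑ₛ C(s, i) tˢ = tⁱ/(1-t)ⁱ⁺¹`
give `F_{m,n}(t) = ∑_{i ≤ n} C(m, n-i) tⁱ/(1-t)ⁱ⁺¹`. As `m ≥ 2n`, `k ↦ C(m, k)` increases on
`k ≤ n`, so every coefficient is at most `C(m, n)`. What remains is `(1-t)⁻¹` times the geometric
sum `∑_{i ≤ n} rⁱ` with ratio `r = t/(1-t)`, and `b_n(t)` is its bound in the three cases
`r < 1`, `r = 1`, `r > 1`. -/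

theorem choose_le_choose_of_le_of_two_mul_le {m n k : ℕ} (hk : k ≤ n) (hn : 2 * n ≤ m) :
    m.choose k ≤ m.choose n := by
  induction hk using Nat.decreasingInduction with
  | self => rfl
  | of_succ j _ ih => exact (Nat.choose_le_succ_of_lt_half_left (by omega)).trans ih

theorem geom_sum_le_of_one_lt {K : Type*} [Field K] [LinearOrder K] [IsStrictOrderedRing K]
    {x : K} (hx : 1 < x) (n : ℕ) : ∑ i ∈ range n, x ^ i ≤ x ^ n / (x - 1) := by
  rw [geom_sum_eq hx.ne']
  exact div_le_div_of_nonneg_right (by linarith) (sub_pos.2 hx).le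

section Series

variable {𝕜 : Type*} [NormedField 𝕜] {t : 𝕜}

theorem hasSum_choose_mul_pow (i : ℕ) (ht : ‖t‖ < 1) :
    HasSum (fun s : ℕ => (s.choose i : 𝕜) * t ^ s) (t ^ i / (1 - t) ^ (i + 1)) := by
  have hshift : HasSum (fun s : ℕ => ((s + i).choose i : 𝕜) * t ^ (s + i))
      (t ^ i / (1 - t) ^ (i + 1)) := by
    have e : (fun s : ℕ => ((s + i).choose i : 𝕜) * t ^ (s + i)) =
        fun s => t ^ i * (((s + i).choose i : 𝕜) * t ^ s) := funext fun s => by ring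
    rw [e, div_eq_mul_one_div]
    exact (hasSum_choose_mul_geometric_of_norm_lt_one i ht).mul_left (t ^ i)
  have hinitial : ∑ s ∈ range i, (s.choose i : 𝕜) * t ^ s = 0 :=
    Finset.sum_eq_zero fun s hs => by
      rw [Nat.choose_eq_zero_of_lt (Finset.mem_range.mp hs), Nat.cast_zero, zero_mul]
  simpa [hinitial] using (hasSum_nat_add_iff (f := fun s => (s.choose i : 𝕜) * t ^ s) i).mp hshift

theorem hasSum_add_choose_mul_pow (m n : ℕ) (ht : ‖t‖ < 1) :
    HasSum (fun s : ℕ => ((m + s).choose n : 𝕜) * t ^ s)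
      (∑ i ∈ range (n + 1), (m.choose (n - i) : 𝕜) * (t ^ i / (1 - t) ^ (i + 1))) := by
  have vandermonde : ∀ s : ℕ, ((m + s).choose n : 𝕜) * t ^ s =
      ∑ i ∈ range (n + 1), (m.choose (n - i) : 𝕜) * ((s.choose i : 𝕜) * t ^ s) := fun s => by
    rw [Nat.add_choose_eq, ← Finset.Nat.sum_antidiagonal_swap,
      Finset.Nat.sum_antidiagonal_eq_sum_range_succ_mk, Nat.cast_sum, Finset.sum_mul]
    exact Finset.sum_congr rfl fun i _ => by simp only [Prod.swap_prod_mk]; push_cast; ring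
  simpa only [vandermonde] using
    hasSum_sum fun i _ => (hasSum_choose_mul_pow i ht).mul_left (m.choose (n - i) : 𝕜)

end Series

theorem sum_pow_div_one_sub_pow_le_bfun (n : ℕ) {t : ℝ} (ht0 : 0 ≤ t) (ht1 : t < 1) :
    ∑ i ∈ range (n + 1), t ^ i / (1 - t) ^ (i + 1) ≤ bfun n t := by
  have h1t : 0 < 1 - t := sub_pos.2 ht1
  set r := t / (1 - t) with hr
  have hgeom : ∑ i ∈ range (n + 1), t ^ i / (1 - t) ^ (i + 1)
      = (1 - t)⁻¹ * ∑ i ∈ range (n + 1), r ^ i := by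
    rw [Finset.mul_sum]
    exact Finset.sum_congr rfl fun i _ => by rw [hr, div_pow, pow_succ]; field_simp
  rw [hgeom]
  rcases lt_trichotomy t (1 / 2) with hlt | rfl | hgt
  · have hr1 : r < 1 := (div_lt_one h1t).2 (by linarith)
    calc (1 - t)⁻¹ * ∑ i ∈ range (n + 1), r ^ i ≤ (1 - t)⁻¹ * (r ^ 0 / (1 - r)) := by
          gcongr
          rw [range_eq_Ico]
          exact geom_sum_Ico_le_of_lt_one (by positivity) hr1
      _ = bfun n t := by
          rw [bfun, if_pos hlt, hr]
          field_simp
          ring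
  · norm_num [bfun, hr]
  · have hr1 : 1 < r := (one_lt_div h1t).2 (by linarith)
    calc (1 - t)⁻¹ * ∑ i ∈ range (n + 1), r ^ i ≤ (1 - t)⁻¹ * (r ^ (n + 1) / (r - 1)) := by
          gcongr
          exact geom_sum_le_of_one_lt hr1 (n + 1)
      _ = bfun n t := by
          rw [bfun, if_neg (by linarith), if_neg hgt.ne', hr]
          field_simp
          ring

theorem Fser_le_bfun_general (m n : ℕ) (hmn : 2 * n ≤ m) (t : ℝ)
    (ht0 : 0 < t) (ht1 : t < 1) :
    Fser m n t ≤ (m.choose n : ℝ) * bfun n t := by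
  have ht : ‖t‖ < 1 := by rwa [Real.norm_of_nonneg ht0.le]
  rw [Fser, (hasSum_add_choose_mul_pow m n ht).tsum_eq]
  calc ∑ i ∈ range (n + 1), (m.choose (n - i) : ℝ) * (t ^ i / (1 - t) ^ (i + 1))
      ≤ ∑ i ∈ range (n + 1), (m.choose n : ℝ) * (t ^ i / (1 - t) ^ (i + 1)) := by
        gcongr with i
        exact choose_le_choose_of_le_of_two_mul_le (Nat.sub_le n i) hmn
    _ = (m.choose n : ℝ) * ∑ i ∈ range (n + 1), t ^ i / (1 - t) ^ (i + 1) :=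
        (Finset.mul_sum _ _ _).symm
    _ ≤ (m.choose n : ℝ) * bfun n t := by
        gcongr
        exact sum_pow_div_one_sub_pow_le_bfun n ht0.le ht1

/-- `F_{m,n}(t) ≤ binom(m,n) b_n(t)` for `m ≥ 2n`. -/
theorem Fser_le_bfun (m n : ℕ) (hn : 1 ≤ n) (hmn : 2 * n ≤ m) (t : ℝ)
    (ht0 : 0 < t) (ht1 : t < 1) :
    Fser m n t ≤ (m.choose n : ℝ) * bfun n t :=
  Fser_le_bfun_general m n hmn t ht0 ht1

end Smolyak
end
end

section
/- Let r∈ℕ and let Q be a quasi-interpolation operator built from the cardinal B-spline M_{2r} and a finite even sequence Λ, reproducing all polynomials of degree at most 2r−1, with symbol P_Λ. Then both Laurent polynomials P_even(z) := P_Λ(z) − 2^{−2r+1} P_Λ(z²) Σ_{j=0}^{r} binom(2r,2j) z^{−2j} and P_odd(z) := P_Λ(z) − 2^{−2r+1} P_Λ(z²) Σ_{j=0}^{r−1} binom(2r,2j+1) z^{−2j−1} are divisible by (z−1)^{2r} in the ring of Laurent polynomials: P_even = (z−1)^{2r} P*_even and P_odd = (z−1)^{2r} P*_odd for Laurent polynomials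 P*_even, P*_odd. -/
open scoped BigOperators ENNReal
open Finset

noncomputable section

namespace Smolyak

/-!
Pair a Laurent polynomial `∑ₙ aₙ zⁿ` with a function `f` by `∑ₙ aₙ f(n)`. Multiplication by
`z - 1` is dual to the forward difference, so `(z - 1)^d` divides a Laurent polynomial iff it
annihilates every polynomial of degree `< d`. With `W(z) = ∑ₜ M(t) z^{-t}`, `W₂(z) = W(z²)` and
`V₂(z) = ∑ₜ M(t + 1/2) z^{-2t}`, reproduction of polynomials of degree `< 2r` therefore says that
modulo `(z - 1)^{2r}`
  `W · P_Λ(z) ≡ 1`,  `W₂ · P_Λ(z²) ≡ 1`,  `V₂ · P_Λ(z²) ≡ z`.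
The refinement equation of `M` reads `2^{2r-1} (W₂ + z⁻¹ V₂) = W · (1 + z⁻¹)^{2r}`, and the even and
odd parts of `(1 + z⁻¹)^{2r}` are congruent, their difference being `(1 - z⁻¹)^{2r}`. Multiplying
the refinement equation by `P_Λ(z²)` gives `2^{2r-1} ≡ W · P_Λ(z²) · (even part)`, and then
multiplying by `P_Λ(z)` gives `2^{2r-1} P_Λ(z) ≡ P_Λ(z²) · (even part) ≡ P_Λ(z²) · (odd part)`.
-/

section

open Polynomial LaurentPolynomial MeasureTheory

theorem sum_Icc_neg {M : Type*} [AddCommMonoid M] (m : ℤ) (f : ℤ → M) :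
    ∑ j ∈ Icc (-m) m, f (-j) = ∑ j ∈ Icc (-m) m, f j :=
  sum_nbij' Neg.neg Neg.neg (fun j hj => by simp at hj ⊢; omega)
    (fun j hj => by simp at hj ⊢; omega) (by simp) (by simp) (by simp)

theorem sum_range_two_mul {M : Type*} [AddCommMonoid M] (n : ℕ) (f : ℕ → M) :
    ∑ m ∈ range (2 * n), f m = ∑ t ∈ range n, (f (2 * t) + f (2 * t + 1)) := by
  induction n with
  | zero => simp
  | succ n ih =>
    rw [mul_add, mul_one, sum_range_succ, sum_range_succ, sum_range_succ, ih, add_assoc]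

theorem sum_range_two_mul_add_one {M : Type*} [AddCommMonoid M] (n : ℕ) (f : ℕ → M) :
    ∑ m ∈ range (2 * n + 1), f m =
      ∑ j ∈ range (n + 1), f (2 * j) + ∑ j ∈ range n, f (2 * j + 1) := by
  rw [sum_range_succ, sum_range_two_mul, sum_add_distrib, sum_range_succ (fun j => f (2 * j))]
  abel

/-- `pairing f P = ∑ₙ Pₙ f(n)`. -/
def pairing (f : ℝ → ℝ) : LaurentPolynomial ℝ →ₗ[ℝ] ℝ :=
  Finsupp.linearCombination ℝ (fun n : ℤ => f n) ∘ₗ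
    (AddMonoidAlgebra.coeffLinearEquiv ℝ).toLinearMap

theorem pairing_C_mul_T (f : ℝ → ℝ) (a : ℝ) (n : ℤ) :
    pairing f (LaurentPolynomial.C a * T n) = a * f n := by
  simp [pairing, ← single_eq_C_mul_T]

theorem pairing_T (f : ℝ → ℝ) (n : ℤ) : pairing f (T n) = f n := by
  simpa using pairing_C_mul_T f 1 n

theorem pairing_sub_left (f g : ℝ → ℝ) (P : LaurentPolynomial ℝ) :
    pairing (f - g) P = pairing f P - pairing g P := by
  simp [pairing, Finsupp.linearCombination_apply, ← Finsupp.sum_sub, mul_sub]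

theorem pairing_zero_left (P : LaurentPolynomial ℝ) : pairing 0 P = 0 := by
  simp [pairing, Finsupp.linearCombination_apply]

theorem pairing_mul_T (f : ℝ → ℝ) (P : LaurentPolynomial ℝ) (n : ℤ) :
    pairing f (P * T n) = pairing (fun x => f (x + n)) P := by
  induction P using LaurentPolynomial.induction_on' with
  | add P Q hP hQ => rw [add_mul, map_add, map_add, hP, hQ]
  | C_mul_T m a =>
    rw [mul_assoc, ← T_add, pairing_C_mul_T, pairing_C_mul_T]
    push_cast
    rfl

theorem pairing_mul_T_sub_one (f : ℝ → ℝ) (P : LaurentPolynomial ℝ) :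
    pairing f (P * (T 1 - 1)) = pairing (fwdDiff 1 f) P := by
  rw [mul_sub, mul_one, map_sub, pairing_mul_T, ← pairing_sub_left]
  congr 2 with x
  simp [fwdDiff]

theorem pairing_mul_T_sub_one_pow (f : ℝ → ℝ) (P : LaurentPolynomial ℝ) (d : ℕ) :
    pairing f (P * (T 1 - 1) ^ d) = pairing ((fwdDiff 1)^[d] f) P := by
  induction d generalizing f with
  | zero => simp
  | succ d ih =>
    rw [pow_succ, ← mul_assoc, pairing_mul_T_sub_one, ih, Function.iterate_succ_apply]

theorem pairing_T_sub_one_pow_mul_eq_zero {q : ℝ[X]} {d : ℕ} (hq : q.natDegree < d)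
    (P : LaurentPolynomial ℝ) : pairing q.eval ((T 1 - 1) ^ d * P) = 0 := by
  rw [mul_comm, pairing_mul_T_sub_one_pow, Polynomial.fwdDiff_iter_eq_zero_of_degree_lt hq,
    pairing_zero_left]

theorem pairing_toLaurent (f : ℝ → ℝ) (p : ℝ[X]) {d : ℕ} (hp : p.natDegree < d) :
    pairing f (toLaurent p) = ∑ k ∈ range d, p.coeff k * f k := by
  conv_lhs => rw [p.as_sum_range' d hp]
  simp [map_sum, pairing_C_mul_T]

theorem eq_zero_of_pairing_eq_zero {p : ℝ[X]} {d : ℕ} (hp : p.degree < d)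
    (h : ∀ q : ℝ[X], q.natDegree < d → pairing q.eval (toLaurent p) = 0) : p = 0 := by
  ext k
  rw [coeff_zero]
  by_cases hk : k < d
  · have hinj : Set.InjOn (fun n : ℕ => (n : ℝ)) (range d) :=
      fun _ _ _ _ h => Nat.cast_injective h
    have hk' : k ∈ range d := mem_range.2 hk
    set b := Lagrange.basis (range d) (fun n : ℕ => (n : ℝ)) k
    have hb : b.natDegree < d := by
      rw [Lagrange.natDegree_basis hinj hk', card_range]
      omega
    have hpd : p.natDegree < d := by
      rcases eq_or_ne p 0 with rfl | hp0
      · simpa using hk.trans_le' (Nat.zero_le k)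
      · exact (natDegree_lt_iff_degree_lt hp0).2 hp
    have := h b hb
    rwa [pairing_toLaurent _ _ hpd, sum_eq_single_of_mem k hk'
      (fun i hi hik => by simp [b, Lagrange.eval_basis_of_ne hik.symm hi]),
      Lagrange.eval_basis_self hinj hk', mul_one] at this
  · exact coeff_eq_zero_of_degree_lt (hp.trans_le (by exact_mod_cast not_lt.1 hk))

theorem X_sub_one_pow_dvd_of_pairing_eq_zero {p : ℝ[X]} {d : ℕ}
    (h : ∀ q : ℝ[X], q.natDegree < d → pairing q.eval (toLaurent p) = 0) :
    (X - Polynomial.C 1) ^ d ∣ p := by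
  have hmonic : ((X - Polynomial.C (1 : ℝ)) ^ d).Monic := (monic_X_sub_C 1).pow d
  have hdeg : ((X - Polynomial.C (1 : ℝ)) ^ d).degree = (d : WithBot ℕ) := by
    rw [degree_pow, degree_X_sub_C, nsmul_one]
  rw [← modByMonic_eq_zero_iff_dvd hmonic]
  refine eq_zero_of_pairing_eq_zero (hdeg ▸ degree_modByMonic_lt p hmonic) fun q hq => ?_
  rw [modByMonic_eq_sub_mul_div p _, map_sub, map_sub, h q hq, map_mul, map_pow, map_sub,
    toLaurent_X, toLaurent_C, map_one, pairing_T_sub_one_pow_mul_eq_zero hq, sub_zero]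

theorem T_sub_one_pow_dvd_of_pairing_eq_zero {P : LaurentPolynomial ℝ} {d : ℕ}
    (h : ∀ q : ℝ[X], q.natDegree < d → pairing q.eval P = 0) : (T 1 - 1) ^ d ∣ P := by
  obtain ⟨n, p, hp⟩ := P.exists_T_pow
  have hdvd : (X - Polynomial.C 1) ^ d ∣ p := by
    refine X_sub_one_pow_dvd_of_pairing_eq_zero fun q hq => ?_
    have hq' : (q.comp (X + Polynomial.C (n : ℝ))).natDegree < d := by
      rwa [natDegree_comp, natDegree_X_add_C, mul_one]
    rw [hp, pairing_mul_T]
    simpa using h _ hq'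
  have := map_dvd (toLaurent (R := ℝ)) hdvd
  rw [hp, map_pow, map_sub, toLaurent_X, toLaurent_C, map_one] at this
  exact (isUnit_T (n : ℤ)).dvd_mul_right.1 this

theorem Msp_one (x : ℝ) : Msp 1 x = Set.indicator (Set.Ico 0 1) 1 x := by
  simp [Msp, Set.indicator, Set.mem_Ico]

theorem Msp_succ_succ (n : ℕ) (x : ℝ) :
    Msp (n + 2) x = ∫ u in (x - 1)..x, Msp (n + 1) u := by
  rw [Msp, intervalIntegral.integral_comp_sub_left (Msp (n + 1)) x, sub_zero]

theorem Msp_eq_zero_of_notMem_Ico {ℓ : ℕ} {x : ℝ} (hx : x ∉ Set.Ico 0 (ℓ : ℝ)) :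
    Msp ℓ x = 0 := by
  induction ℓ generalizing x with
  | zero => rfl
  | succ n ih =>
    rcases n with _ | n
    · simpa [Msp_one] using hx
    · rw [Msp]
      refine (intervalIntegral.integral_congr fun t ht => ih ?_).trans (by simp)
      rw [Set.uIcc_of_le zero_le_one] at ht
      simp only [Set.mem_Ico, not_and_or, not_le, not_lt] at hx ⊢
      push_cast at hx ⊢
      rcases hx with hx | hx
      · exact Or.inl (by linarith [ht.1])
      · exact Or.inr (by linarith [ht.2])

theorem intervalIntegrable_Msp (ℓ : ℕ) (a b : ℝ) : IntervalIntegrable (Msp ℓ) volume a b := by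
  induction ℓ generalizing a b with
  | zero => exact intervalIntegrable_const (c := 0)
  | succ n ih =>
    rcases n with _ | n
    · rw [show Msp 1 = Set.indicator (Set.Ico 0 1) 1 from funext Msp_one]
      exact (integrable_indicator_iff measurableSet_Ico).2
        (integrableOn_const (by simp) (by simp)) |>.intervalIntegrable
    · have hprim : Msp (n + 2) = fun x =>
          (∫ u in (0 : ℝ)..x, Msp (n + 1) u) - ∫ u in (0 : ℝ)..(x - 1), Msp (n + 1) u := by
        funext x
        rw [Msp_succ_succ, intervalIntegral.integral_interval_sub_left (ih 0 x) (ih 0 (x - 1))]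
      have hcont := intervalIntegral.continuous_primitive ih 0
      rw [hprim]
      exact (hcont.sub (hcont.comp (continuous_sub_right 1))).intervalIntegrable a b

theorem integral_Msp_sub_two_mul (n : ℕ) (c : ℝ) :
    ∫ t in (0 : ℝ)..1, Msp (n + 1) (c - 2 * t) = (Msp (n + 2) c + Msp (n + 2) (c - 1)) / 2 := by
  rw [intervalIntegral.integral_comp_sub_mul _ two_ne_zero, mul_one, mul_zero, sub_zero,
    ← intervalIntegral.integral_add_adjacent_intervals (b := c - 1) (intervalIntegrable_Msp _ _ _)
      (intervalIntegrable_Msp _ _ _), Msp_succ_succ, Msp_succ_succ, smul_eq_mul,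
    show c - 1 - 1 = c - 2 by ring]
  ring

theorem Msp_one_refinement (x : ℝ) : Msp 1 x = Msp 1 (2 * x) + Msp 1 (2 * x - 1) := by
  simp only [Msp_one, Set.indicator, Set.mem_Ico, Pi.one_apply]
  split_ifs <;> grind

theorem Msp_refinement (ℓ : ℕ) (x : ℝ) :
    2 ^ (ℓ - 1) * Msp ℓ x = ∑ j ∈ range (ℓ + 1), (ℓ.choose j : ℝ) * Msp ℓ (2 * x - j) := by
  induction ℓ generalizing x with
  | zero => simp [Msp]
  | succ n ih =>
    rcases n with _ | n
    · simp [sum_range_succ, Msp_one_refinement x]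
    simp only [Nat.add_sub_cancel] at ih ⊢
    have hint : ∀ j : ℕ,
        IntervalIntegrable (fun t => Msp (n + 1) (2 * x - j - 2 * t)) volume 0 1 := fun j => by
      simpa using ((intervalIntegrable_Msp (n + 1) (2 * x - j) (2 * x - j - 2)).comp_sub_left
        (2 * x - j)).comp_mul_left (c := 2)
    calc 2 ^ (n + 1) * Msp (n + 2) x
        = 2 * ∫ t in (0 : ℝ)..1, 2 ^ n * Msp (n + 1) (x - t) := by
          rw [Msp, intervalIntegral.integral_const_mul, pow_succ]
          ring
      _ = 2 * ∑ j ∈ range (n + 2), ((n + 1).choose j : ℝ) *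
            ∫ t in (0 : ℝ)..1, Msp (n + 1) (2 * x - j - 2 * t) := by
          simp_rw [← intervalIntegral.integral_const_mul (((n + 1).choose _ : ℕ) : ℝ),
            ← intervalIntegral.integral_finsetSum fun j _ => (hint j).const_mul _, ih]
          congr 1
          refine intervalIntegral.integral_congr fun t _ => sum_congr rfl fun j _ => ?_
          ring_nf
      _ = ∑ j ∈ range (n + 2), ((n + 1).choose j : ℝ) *
            (Msp (n + 2) (2 * x - j) + Msp (n + 2) (2 * x - (j + 1 : ℕ))) := by
          simp_rw [integral_Msp_sub_two_mul, mul_sum]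
          push_cast
          refine sum_congr rfl fun j _ => by ring_nf
      _ = ∑ j ∈ range (n + 3), ((n + 2).choose j : ℝ) * Msp (n + 2) (2 * x - j) := by
          rw [sum_choose_succ_mul (fun j _ => Msp (n + 2) (2 * x - j)) (n + 1),
            ← sum_add_distrib]
          simp_rw [mul_add]

/-- `∑_{t<ℓ} M_ℓ(t + θ) z^{-at}`; the `W`, `W₂`, `V₂` above are `splineSymbol (2r) 1 0`,
`splineSymbol (2r) 2 0` and `splineSymbol (2r) 2 (1/2)`. -/
def splineSymbol (ℓ a : ℕ) (θ : ℝ) : LaurentPolynomial ℝ :=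
  ∑ t ∈ range ℓ, LaurentPolynomial.C (Msp ℓ (t + θ)) * T (-(a * t : ℤ))

/-- `P_Λ(z^a)`. -/
def dilatedSymbol (r μ a : ℕ) (lam : ℤ → ℝ) : LaurentPolynomial ℝ :=
  T (a * r : ℤ) * ∑ j ∈ Icc (-(μ : ℤ)) μ, LaurentPolynomial.C (lam j) * T (a * j)

theorem PLam_eq_dilatedSymbol (r μ : ℕ) (lam : ℤ → ℝ) :
    PLam r μ lam = dilatedSymbol r μ 1 lam := by
  simp [PLam, dilatedSymbol]

theorem PLam2_eq_dilatedSymbol (r μ : ℕ) (lam : ℤ → ℝ) :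
    PLam2 r μ lam = dilatedSymbol r μ 2 lam := by
  simp [PLam2, dilatedSymbol]

theorem splineSymbol_two_eq_sum (ℓ : ℕ) :
    splineSymbol ℓ 2 0 + T (-1) * splineSymbol ℓ 2 (1 / 2) =
      ∑ m ∈ range (2 * ℓ), LaurentPolynomial.C (Msp ℓ (m / 2)) * T (-m) := by
  rw [sum_range_two_mul, splineSymbol, splineSymbol, mul_sum, ← sum_add_distrib]
  refine sum_congr rfl fun t _ => ?_
  rw [mul_left_comm, ← T_add]
  push_cast
  ring_nf

theorem sum_C_Msp_sub_mul_T (ℓ : ℕ) {k : ℕ} (hk : k ≤ ℓ) :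
    ∑ m ∈ range (2 * ℓ), LaurentPolynomial.C (Msp ℓ (m - k)) * T (-m) =
      T (-k) * splineSymbol ℓ 1 0 := by
  have hzero : ∀ m ∈ range k, LaurentPolynomial.C (Msp ℓ (m - k)) * T (-(m : ℤ)) = 0 := by
    intro m hm
    have : (m : ℝ) < k := by exact_mod_cast mem_range.1 hm
    rw [Msp_eq_zero_of_notMem_Ico fun hx => by linarith [hx.1], map_zero, zero_mul]
  rw [show 2 * ℓ = k + (2 * ℓ - k) by omega, sum_range_add, sum_eq_zero hzero, zero_add,
    splineSymbol, mul_sum]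
  symm
  refine sum_subset (range_subset_range.2 (by omega)) (fun t _ ht => ?_) |>.trans
    (sum_congr rfl fun t _ => ?_)
  · have : (ℓ : ℝ) ≤ t := by exact_mod_cast not_lt.1 (mem_range.not.1 ht)
    rw [Msp_eq_zero_of_notMem_Ico fun hx => by linarith [hx.2], map_zero, zero_mul, mul_zero]
  · rw [mul_left_comm, ← T_add]
    push_cast
    ring_nf

theorem splineSymbol_refinement (ℓ : ℕ) :
    LaurentPolynomial.C (2 ^ (ℓ - 1)) * (splineSymbol ℓ 2 0 + T (-1) * splineSymbol ℓ 2 (1 / 2)) =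
      splineSymbol ℓ 1 0 * (1 + T (-1)) ^ ℓ := by
  rw [splineSymbol_two_eq_sum, mul_sum]
  calc ∑ m ∈ range (2 * ℓ), LaurentPolynomial.C (2 ^ (ℓ - 1)) *
        (LaurentPolynomial.C (Msp ℓ (m / 2)) * T (-m))
      = ∑ m ∈ range (2 * ℓ), ∑ k ∈ range (ℓ + 1), LaurentPolynomial.C (ℓ.choose k : ℝ) *
          (LaurentPolynomial.C (Msp ℓ (m - k)) * T (-m)) := by
        refine sum_congr rfl fun m _ => ?_
        rw [← mul_assoc, ← map_mul, Msp_refinement, mul_div_cancel₀ _ two_ne_zero, map_sum,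
          sum_mul]
        simp only [map_mul, mul_assoc]
    _ = ∑ k ∈ range (ℓ + 1),
          LaurentPolynomial.C (ℓ.choose k : ℝ) * (T (-k) * splineSymbol ℓ 1 0) := by
        rw [sum_comm]
        refine sum_congr rfl fun k hk => ?_
        rw [← mul_sum, sum_C_Msp_sub_mul_T ℓ (by simpa [Nat.lt_succ_iff] using hk)]
    _ = splineSymbol ℓ 1 0 * (1 + T (-1)) ^ ℓ := by
        rw [add_comm (1 : LaurentPolynomial ℝ), add_pow, mul_sum]
        refine sum_congr rfl fun k _ => ?_
        rw [one_pow, mul_one, T_pow, map_natCast]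
        ring_nf

section Reproduction

variable {r μ : ℕ} {lam : ℤ → ℝ}

theorem Reproduces.sum_Msp_mul_eq_eval (hrep : Reproduces r μ lam) {θ : ℝ} (hθ0 : 0 ≤ θ)
    (hθ1 : θ < 1) {g : ℝ[X]} (hg : g.natDegree < 2 * r) :
    ∑ t ∈ range (2 * r), Msp (2 * r) (t + θ) *
        ∑ j ∈ Icc (-(μ : ℤ)) μ, lam j * g.eval (-(t : ℝ) - j + r) = g.eval θ := by
  have hsupp : ∀ s ∉ (range (2 * r)).image (fun t : ℕ => -(t : ℤ)),
      (∑ j ∈ Icc (-(μ : ℤ)) μ, lam j * g.eval ((s : ℝ) - j + r)) * Msp (2 * r) (θ - s) = 0 := by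
    intro s hs
    rw [Msp_eq_zero_of_notMem_Ico, mul_zero]
    rintro ⟨h0, h1⟩
    have hs1 : s < 1 := by exact_mod_cast (by linarith : (s : ℝ) < 1)
    have hs2 : -(2 * r : ℤ) < s := by
      exact_mod_cast (by push_cast at h1 ⊢; linarith : -(2 * r : ℝ) < s)
    exact hs (mem_image.2 ⟨(-s).toNat, mem_range.2 (by omega), by omega⟩)
  rw [← hrep g hg θ, tsum_eq_sum hsupp, sum_image (fun _ _ _ _ h => by simpa using h)]
  refine sum_congr rfl fun t _ => ?_
  push_cast
  rw [mul_comm, sub_neg_eq_add, add_comm θ]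

theorem pairing_splineSymbol_mul_dilatedSymbol (heven : EvenSeq μ lam)
    (hrep : Reproduces r μ lam) (a : ℕ) {θ : ℝ} (hθ0 : 0 ≤ θ) (hθ1 : θ < 1) {q : ℝ[X]}
    (hq : q.natDegree < 2 * r) :
    pairing q.eval (splineSymbol (2 * r) a θ * dilatedSymbol r μ a lam) = q.eval (a * θ) := by
  set g := q.comp (Polynomial.C (a : ℝ) * X)
  have hg : g.natDegree < 2 * r :=
    natDegree_comp_le.trans_lt (by nlinarith [(natDegree_C_mul_le (a : ℝ) X).trans natDegree_X_le])
  have hterm : ∀ (t : ℕ) (j : ℤ),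
      LaurentPolynomial.C (Msp (2 * r) (t + θ)) * T (-(a * t : ℤ)) *
        (T (a * r : ℤ) * (LaurentPolynomial.C (lam j) * T (a * j))) =
      LaurentPolynomial.C (Msp (2 * r) (t + θ) * lam j) * T (-(a * t) + a * r + a * j) := by
    intro t j
    rw [T_add, T_add, map_mul]
    ring
  rw [show q.eval (a * θ) = g.eval θ by simp [g], ← hrep.sum_Msp_mul_eq_eval hθ0 hθ1 hg,
    splineSymbol, dilatedSymbol, sum_mul, map_sum]
  refine sum_congr rfl fun t _ => ?_
  simp only [mul_sum, hterm, map_sum, pairing_C_mul_T]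
  rw [← sum_Icc_neg]
  refine sum_congr rfl fun j _ => ?_
  rw [heven.1, mul_assoc]
  simp only [g, eval_comp, eval_mul, eval_C, eval_X]
  push_cast
  ring_nf

theorem mk_splineSymbol_mul_mk_dilatedSymbol (heven : EvenSeq μ lam)
    (hrep : Reproduces r μ lam) (a : ℕ) {θ : ℝ} (hθ0 : 0 ≤ θ) (hθ1 : θ < 1) {n : ℤ}
    (hn : a * θ = n) :
    let π := Ideal.Quotient.mk (Ideal.span {(T 1 - 1 : LaurentPolynomial ℝ) ^ (2 * r)})
    π (splineSymbol (2 * r) a θ) * π (dilatedSymbol r μ a lam) = π (T n) := by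
  intro π
  rw [← map_mul, Ideal.Quotient.eq, Ideal.mem_span_singleton]
  refine T_sub_one_pow_dvd_of_pairing_eq_zero fun q hq => ?_
  rw [map_sub, pairing_splineSymbol_mul_dilatedSymbol heven hrep a hθ0 hθ1 hq, pairing_T, hn,
    sub_self]

end Reproduction

def evenBinomialPart (r : ℕ) : LaurentPolynomial ℝ :=
  ∑ j ∈ range (r + 1), LaurentPolynomial.C (((2 * r).choose (2 * j) : ℝ)) * T (-(2 * (j : ℤ)))

def oddBinomialPart (r : ℕ) : LaurentPolynomial ℝ :=
  ∑ j ∈ range r, LaurentPolynomial.C (((2 * r).choose (2 * j + 1) : ℝ)) * T (-(2 * (j : ℤ) + 1))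

theorem evenBinomialPart_add_C_mul_oddBinomialPart (r : ℕ) {c : ℝ} (hc : c ^ 2 = 1) :
    evenBinomialPart r + LaurentPolynomial.C c * oddBinomialPart r =
      (1 + LaurentPolynomial.C c * T (-1)) ^ (2 * r) := by
  have hterm : ∀ k, (LaurentPolynomial.C c * T (-1)) ^ k * 1 ^ (2 * r - k) *
      ((2 * r).choose k : LaurentPolynomial ℝ) =
      LaurentPolynomial.C (c ^ k * (2 * r).choose k) * T (-k) := by
    intro k
    rw [one_pow, mul_one, mul_pow, T_pow, map_mul, map_pow, map_natCast]
    ring_nf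
  rw [add_comm 1, add_pow, sum_congr rfl fun k _ => hterm k, sum_range_two_mul_add_one,
    evenBinomialPart, oddBinomialPart, mul_sum]
  congr 1 <;> refine sum_congr rfl fun j _ => ?_
  · rw [pow_mul, hc, one_pow, one_mul]
    push_cast
    ring_nf
  · rw [pow_succ, pow_mul, hc, one_pow, one_mul, map_mul]
    push_cast
    ring_nf

theorem evenBinomialPart_add_oddBinomialPart (r : ℕ) :
    evenBinomialPart r + oddBinomialPart r = (1 + T (-1)) ^ (2 * r) := by
  simpa using evenBinomialPart_add_C_mul_oddBinomialPart r (c := 1) (by norm_num)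

theorem T_sub_one_pow_dvd_evenBinomialPart_sub_oddBinomialPart (r : ℕ) :
    (T 1 - 1) ^ (2 * r) ∣ evenBinomialPart r - oddBinomialPart r := by
  have h := evenBinomialPart_add_C_mul_oddBinomialPart r (c := -1) (by norm_num)
  simp only [map_neg, map_one, neg_one_mul, ← sub_eq_add_neg] at h
  rw [show (1 : LaurentPolynomial ℝ) - T (-1) = T (-1) * (T 1 - 1) by
      rw [mul_sub, ← T_add]; simp, mul_pow] at h
  exact h ▸ dvd_mul_left _ _

theorem Peven_eq (r μ : ℕ) (lam : ℤ → ℝ) :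
    Peven r μ lam = PLam r μ lam - LaurentPolynomial.C ((2 : ℝ) ^ (2 * r - 1))⁻¹ *
      PLam2 r μ lam * evenBinomialPart r := rfl

theorem Podd_eq (r μ : ℕ) (lam : ℤ → ℝ) :
    Podd r μ lam = PLam r μ lam - LaurentPolynomial.C ((2 : ℝ) ^ (2 * r - 1))⁻¹ *
      PLam2 r μ lam * oddBinomialPart r := rfl

theorem T_sub_one_pow_dvd_Peven {r μ : ℕ} {lam : ℤ → ℝ} (heven : EvenSeq μ lam)
    (hrep : Reproduces r μ lam) : (T 1 - 1) ^ (2 * r) ∣ Peven r μ lam := by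
  set π := Ideal.Quotient.mk (Ideal.span {(T 1 - 1 : LaurentPolynomial ℝ) ^ (2 * r)})
  have hW : π (splineSymbol (2 * r) 1 0) * π (PLam r μ lam) = 1 := by
    simpa [← PLam_eq_dilatedSymbol] using
      mk_splineSymbol_mul_mk_dilatedSymbol heven hrep 1 le_rfl one_pos (n := 0) (by simp)
  have hW₂ : π (splineSymbol (2 * r) 2 0) * π (PLam2 r μ lam) = 1 := by
    simpa [← PLam2_eq_dilatedSymbol] using
      mk_splineSymbol_mul_mk_dilatedSymbol heven hrep 2 le_rfl one_pos (n := 0) (by simp)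
  have hV₂ : π (splineSymbol (2 * r) 2 (1 / 2)) * π (PLam2 r μ lam) = π (T 1) := by
    simpa [← PLam2_eq_dilatedSymbol] using
      mk_splineSymbol_mul_mk_dilatedSymbol heven hrep 2 (by norm_num) (by norm_num) (n := 1)
        (by norm_num)
  have hS : π (evenBinomialPart r) = π (oddBinomialPart r) :=
    Ideal.Quotient.eq.2 (Ideal.mem_span_singleton.2
      (T_sub_one_pow_dvd_evenBinomialPart_sub_oddBinomialPart r))
  have hR := congrArg π (splineSymbol_refinement (2 * r))
  rw [← evenBinomialPart_add_oddBinomialPart] at hR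
  simp only [map_mul, map_add] at hR
  have hT : π (T (-1)) * π (T 1) = 1 := by rw [← map_mul, ← T_add]; simp
  have hc : π (LaurentPolynomial.C (2 ^ (2 * r - 1))⁻¹) *
      π (LaurentPolynomial.C (2 ^ (2 * r - 1))) = 1 := by
    rw [← map_mul, ← map_mul, inv_mul_cancel₀ (by positivity), map_one, map_one]
  have h2 : π (LaurentPolynomial.C 2⁻¹) * 2 = 1 := by
    rw [← map_ofNat π 2, ← map_ofNat LaurentPolynomial.C 2, ← map_mul, ← map_mul,
      inv_mul_cancel₀ two_ne_zero, map_one, map_one]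
  set p := π (PLam r μ lam)
  set p₂ := π (PLam2 r μ lam)
  set w := π (splineSymbol (2 * r) 1 0)
  set e := π (evenBinomialPart r)
  set c := π (LaurentPolynomial.C (2 ^ (2 * r - 1)))
  have htwice : 2 * (w * e * p₂) = 2 * c := by
    linear_combination (-p₂) * hR + c * hW₂ + c * π (T (-1)) * hV₂ + c * hT + w * p₂ * hS
  have hkey : w * e * p₂ = c := by
    linear_combination π (LaurentPolynomial.C 2⁻¹) * htwice - (w * e * p₂ - c) * h2
  rw [← Ideal.Quotient.eq_zero_iff_dvd, Peven_eq, map_sub, map_mul, map_mul, sub_eq_zero]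
  linear_combination (-p) * hc + π (LaurentPolynomial.C (2 ^ (2 * r - 1))⁻¹) * p₂ * e * hW
    - π (LaurentPolynomial.C (2 ^ (2 * r - 1))⁻¹) * p * hkey

end

theorem Peven_Podd_factor_general (r μ : ℕ) (lam : ℤ → ℝ)
    (heven : EvenSeq μ lam) (hrep : Reproduces r μ lam) :
    (∃ Qe : LaurentPolynomial ℝ,
      Peven r μ lam = (LaurentPolynomial.T 1 - 1) ^ (2*r) * Qe) ∧
    (∃ Qo : LaurentPolynomial ℝ,
      Podd r μ lam = (LaurentPolynomial.T 1 - 1) ^ (2*r) * Qo) := by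
  have hPeven := T_sub_one_pow_dvd_Peven heven hrep
  have hPodd : Podd r μ lam = Peven r μ lam + LaurentPolynomial.C ((2 : ℝ) ^ (2 * r - 1))⁻¹ *
      PLam2 r μ lam * (evenBinomialPart r - oddBinomialPart r) := by
    rw [Podd_eq, Peven_eq]
    ring
  refine ⟨hPeven, ?_⟩
  rw [hPodd]
  exact dvd_add hPeven
    (dvd_mul_of_dvd_right (T_sub_one_pow_dvd_evenBinomialPart_sub_oddBinomialPart r) _)

/-- `P_even` and `P_odd` are divisible by `(z−1)^{2r}`. -/
theorem Peven_Podd_factor (r μ : ℕ) (hr : 1 ≤ r) (hμ : r - 1 ≤ μ) (lam : ℤ → ℝ)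
    (heven : EvenSeq μ lam) (hrep : Reproduces r μ lam) :
    (∃ Qe : LaurentPolynomial ℝ,
      Peven r μ lam = (LaurentPolynomial.T 1 - 1) ^ (2*r) * Qe) ∧
    (∃ Qo : LaurentPolynomial ℝ,
      Podd r μ lam = (LaurentPolynomial.T 1 - 1) ^ (2*r) * Qo) :=
  Peven_Podd_factor_general r μ lam heven hrep

end Smolyak
end
end
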